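/- Let α be an index tuple with indices from {0,…,m−1} satisfying the SIP, and suppose c_k(α) ≤ 1 and i_k(α) ≤ 1 for every index 1 ≤ k ≤ m−1. Let 𝒳 be a matrix assignment for α. Then M_α(𝒳) is a block penta-diagonal matrix; equivalently, for every k = 0,…,m−1, (e^T_{m−k} ⊗ I_n) M_α(𝒳) = Σ_{j=−2}^{2} (e^T_{m−(k−j)} ⊗ X_j), where each X_j is 0, I_n, or one of the matrices occurring in 𝒳. -/

import Mathlib

open Matrix Polynomial

/-- Signed indices: `pos k` denotes `k` and `neg k` denotes `−k`, with `−0` and `0` distinct. -/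
inductive SIdx : Type where
  | pos : ℕ → SIdx
  | neg : ℕ → SIdx
deriving DecidableEq

namespace SIdx

/-- The absolute value of a signed index. -/
def val : SIdx → ℕ
  | pos k => k
  | neg k => k

/-- Whether a signed index is negative. -/
def isNeg : SIdx → Bool
  | pos _ => false
  | neg _ => true

/-- The successor `t + 1` of a signed index (`−s + 1 = −(s−1)`). -/
def succ : SIdx → SIdx
  | pos k => pos (k + 1)
  | neg 0 => pos 0
  | neg (k + 1) => neg k

/-- Negation of a signed index. -/
def negate : SIdx → SIdx
  | pos k => neg k
  | neg k => pos k

end SIdx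

/-- The ascending chain `(t, t+1, …, t+p)`. -/
def chainUp (t : SIdx) : ℕ → List SIdx
  | 0 => [t]
  | p + 1 => t :: chainUp t.succ p

/-- The number of consecutions `c_t(α)` of the index tuple `α` at `t` (`−1` when `t ∉ α`):
the largest `p` such that `(t, t+1, …, t+p)` is a subtuple (sublist) of `α`. -/
noncomputable def consAt (α : List SIdx) (t : SIdx) : ℤ :=
  letI := Classical.decPred (fun p : ℕ => (chainUp t p).Sublist α)
  if t ∈ α then (Nat.findGreatest (fun p : ℕ => (chainUp t p).Sublist α) α.length : ℤ) else -1

/-- The number of inversions `i_t(α)` of the index tuple `α` at `t` (`−1` when `t ∉ α`):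
the largest `q` such that `(t+q, …, t+1, t)` is a subtuple (sublist) of `α`. -/
noncomputable def invsAt (α : List SIdx) (t : SIdx) : ℤ :=
  letI := Classical.decPred (fun p : ℕ => ((chainUp t p).reverse).Sublist α)
  if t ∈ α then (Nat.findGreatest (fun p : ℕ => ((chainUp t p).reverse).Sublist α) α.length : ℤ)
  else -1

/-- The Successor Infix Property: between any two equal entries there is an occurrence of
their successor. -/
def SIP (α : List SIdx) : Prop :=
  ∀ a b : Fin α.length, a < b → α.get a = α.get b →
    ∃ c : Fin α.length, a < c ∧ c < b ∧ α.get c = (α.get a).succ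

/-- The `mn × mn` elementary matrix `M_k(X)` (viewed as an `m × m` block matrix with
`n × n` blocks): `M_0(X) = M_{−0}(X) = diag(I_{(m−1)n}, X)`,
`M_m(X) = M_{−m}(X) = diag(X, I_{(m−1)n})`, and for `1 ≤ i ≤ m−1` the matrix `M_i(X)`
(resp. `M_{−i}(X)`) is the identity except for the 2×2 block submatrix
`[[X, I],[I, 0]]` (resp. `[[0, I],[I, X]]`) in block rows/columns `(m−i, m−i+1)`
(1-indexed). -/
noncomputable def elemMat (m n : ℕ) (k : SIdx) (X : Matrix (Fin n) (Fin n) ℂ) :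
    Matrix (Fin m × Fin n) (Fin m × Fin n) ℂ := fun p q =>
  if k.val = 0 then
    if p.1 = q.1 then (if (p.1 : ℕ) = m - 1 then X p.2 q.2 else if p.2 = q.2 then 1 else 0)
    else 0
  else if k.val = m then
    if p.1 = q.1 then (if (p.1 : ℕ) = 0 then X p.2 q.2 else if p.2 = q.2 then 1 else 0)
    else 0
  else
    if (p.1 : ℕ) = m - k.val - 1 ∧ (q.1 : ℕ) = m - k.val - 1 then
      (if k.isNeg then 0 else X p.2 q.2)
    else if ((p.1 : ℕ) = m - k.val - 1 ∧ (q.1 : ℕ) = m - k.val) ∨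
        ((p.1 : ℕ) = m - k.val ∧ (q.1 : ℕ) = m - k.val - 1) then
      (if p.2 = q.2 then 1 else 0)
    else if (p.1 : ℕ) = m - k.val ∧ (q.1 : ℕ) = m - k.val then
      (if k.isNeg then X p.2 q.2 else 0)
    else if p = q then 1 else 0

/-- `M_t(X) = M_{t_1}(X_1) ⋯ M_{t_r}(X_r)` for an index tuple `t` with matrix assignment `Xs`. -/
noncomputable def prodAssign (m n : ℕ) (t : List SIdx) (Xs : List (Matrix (Fin n) (Fin n) ℂ)) :
    Matrix (Fin m × Fin n) (Fin m × Fin n) ℂ :=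
  ((t.zip Xs).map fun p => elemMat m n p.1 p.2).prod

/-- The trivial (Fiedler) matrix assignment of `P(λ) = Σ λ^i A_i`:
`M_i^P = M_i(−A_i)` for `0 ≤ i ≤ m−1`, `M_m^P = (M_{−m}^P)⁻¹ = M_m(A_m⁻¹)`,
`M_{−i}^P = M_{−i}(A_i)` for `1 ≤ i ≤ m`, and `M_{−0}^P = (M_0^P)⁻¹ = M_{−0}((−A_0)⁻¹)`. -/
noncomputable def fiedlerX (m : ℕ) {n : ℕ} (A : ℕ → Matrix (Fin n) (Fin n) ℂ) :
    SIdx → Matrix (Fin n) (Fin n) ℂ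
  | .pos i => if i = m then (A m)⁻¹ else -A i
  | .neg i => if i = 0 then (-A 0)⁻¹ else A i

/-- `M_t^P`, the product of Fiedler matrices of `P` along the index tuple `t`. -/
noncomputable def prodFiedler (m n : ℕ) (A : ℕ → Matrix (Fin n) (Fin n) ℂ) (t : List SIdx) :
    Matrix (Fin m × Fin n) (Fin m × Fin n) ℂ :=
  (t.map fun k => elemMat m n k (fiedlerX m A k)).prod

/-- A nonsingular matrix assignment: the matrices assigned to positions with indices
`±0` or `±m` are nonsingular. -/
def NonsingAssign (m : ℕ) {n : ℕ} (t : List SIdx) (Xs : List (Matrix (Fin n) (Fin n) ℂ)) :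
    Prop :=
  t.length = Xs.length ∧ ∀ p ∈ t.zip Xs, (p.1.val = 0 ∨ p.1.val = m) → IsUnit p.2

/-- The data of an extended generalized Fiedler pencil (EGFP)
`L(λ) = M_{τ₁}(Y₁) M_{σ₁}(X₁) (λ M_τ^P − M_σ^P) M_{σ₂}(X₂) M_{τ₂}(Y₂)`
of the `n × n` matrix polynomial `P(λ) = Σ_{i=0}^m λ^i A_i` of degree `m ≥ 2`. -/
structure EGFPData (m n : ℕ) where
  /-- coefficients of `P` -/
  A : ℕ → Matrix (Fin n) (Fin n) ℂ
  sig : List SIdx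
  tau : List SIdx
  sig1 : List SIdx
  sig2 : List SIdx
  tau1 : List SIdx
  tau2 : List SIdx
  X1 : List (Matrix (Fin n) (Fin n) ℂ)
  X2 : List (Matrix (Fin n) (Fin n) ℂ)
  Y1 : List (Matrix (Fin n) (Fin n) ℂ)
  Y2 : List (Matrix (Fin n) (Fin n) ℂ)
  hm : 2 ≤ m
  hAm : A m ≠ 0
  hsigpos : ∀ k ∈ sig, k.isNeg = false
  htauneg : ∀ k ∈ tau, k.isNeg = true
  /-- `(σ, ω)` is a permutation of `{0, 1, …, m}`, where `τ = −ω`. -/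
  hperm : List.Perm (sig.map SIdx.val ++ tau.map SIdx.val) (List.range (m + 1))
  hsig1 : ∀ k ∈ sig1, k ∈ sig ∧ k.val + 2 ≤ m
  hsig2 : ∀ k ∈ sig2, k ∈ sig ∧ k.val + 2 ≤ m
  htau1 : ∀ k ∈ tau1, k ∈ tau ∧ 2 ≤ k.val
  htau2 : ∀ k ∈ tau2, k ∈ tau ∧ 2 ≤ k.val
  hSIPsig : SIP (sig1 ++ sig ++ sig2)
  hSIPtau : SIP (tau1 ++ tau ++ tau2)
  hX1 : NonsingAssign m sig1 X1
  hX2 : NonsingAssign m sig2 X2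
  hY1 : NonsingAssign m tau1 Y1
  hY2 : NonsingAssign m tau2 Y2
  hA0 : SIdx.neg 0 ∈ tau → IsUnit (A 0)
  hAmUnit : SIdx.pos m ∈ sig → IsUnit (A m)

namespace EGFPData

variable {m n : ℕ}

/-- `M_{τ₁}(Y₁) M_{σ₁}(X₁)`. -/
noncomputable def leftFac (E : EGFPData m n) : Matrix (Fin m × Fin n) (Fin m × Fin n) ℂ :=
  prodAssign m n E.tau1 E.Y1 * prodAssign m n E.sig1 E.X1

/-- `M_{σ₂}(X₂) M_{τ₂}(Y₂)`. -/
noncomputable def rightFac (E : EGFPData m n) : Matrix (Fin m × Fin n) (Fin m × Fin n) ℂ :=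
  prodAssign m n E.sig2 E.X2 * prodAssign m n E.tau2 E.Y2

/-- The coefficient `L₁` of `λ` in `L(λ) = λ L₁ − L₀`. -/
noncomputable def L1 (E : EGFPData m n) : Matrix (Fin m × Fin n) (Fin m × Fin n) ℂ :=
  E.leftFac * prodFiedler m n E.A E.tau * E.rightFac

/-- The constant term `L₀` in `L(λ) = λ L₁ − L₀`. -/
noncomputable def L0 (E : EGFPData m n) : Matrix (Fin m × Fin n) (Fin m × Fin n) ℂ :=
  E.leftFac * prodFiedler m n E.A E.sig * E.rightFac

end EGFPData

/-- The `(i, j)` block (of size `n × n`) of an `mn × mn` matrix. -/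
def blockOf {m n : ℕ} (M : Matrix (Fin m × Fin n) (Fin m × Fin n) ℂ) (i j : Fin m) :
    Matrix (Fin n) (Fin n) ℂ := fun p q => M (i, p) (j, q)

/-- Block penta-diagonal: all blocks `B_{ij}` with `|i − j| > 2` vanish. -/
def BlockPenta {m n : ℕ} (M : Matrix (Fin m × Fin n) (Fin m × Fin n) ℂ) : Prop :=
  ∀ i j : Fin m, ((i : ℕ) + 2 < (j : ℕ) ∨ (j : ℕ) + 2 < (i : ℕ)) → blockOf M i j = 0

/-- Block tridiagonal: all blocks `B_{ij}` with `|i − j| > 1` vanish. -/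
def BlockTri {m n : ℕ} (M : Matrix (Fin m × Fin n) (Fin m × Fin n) ℂ) : Prop :=
  ∀ i j : Fin m, ((i : ℕ) + 1 < (j : ℕ) ∨ (j : ℕ) + 1 < (i : ℕ)) → blockOf M i j = 0

/-- `e_j^T ⊗ I_n` as an `n × mn` matrix, for a 1-indexed block index `j`
(zero when `j` is out of range). -/
def rowSel (m n : ℕ) (j : ℤ) : Matrix (Fin n) (Fin m × Fin n) ℂ :=
  fun p q => if ((q.1 : ℕ) : ℤ) + 1 = j ∧ p = q.2 then 1 else 0

/-- `e_j ⊗ I_n` as an `mn × n` matrix, for a 1-indexed block index `j`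
(zero when `j` is out of range). -/
def colSel (m n : ℕ) (j : ℤ) : Matrix (Fin m × Fin n) (Fin n) ℂ :=
  fun p q => if ((p.1 : ℕ) : ℤ) + 1 = j ∧ p.2 = q then 1 else 0

/-- The matrix polynomial `P(λ) = Σ_{i=0}^m λ^i A_i` as an `n × n` matrix over `ℂ[λ]`. -/
noncomputable def polyP (m n : ℕ) (A : ℕ → Matrix (Fin n) (Fin n) ℂ) :
    Matrix (Fin n) (Fin n) (Polynomial ℂ) := fun p q =>
  ∑ i ∈ Finset.range (m + 1), Polynomial.C (A i p q) * Polynomial.X ^ i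


/-! ### Auxiliary development for Statement 2 -/

namespace PentaAux

open List

/-- `NFl u g`: `pos u` occurs in `g` with no later `pos u` nor `pos (u+1)`. -/
def NFl (u : ℕ) (g : List SIdx) : Prop :=
  ∃ a b : List SIdx, g = a ++ SIdx.pos u :: b ∧ SIdx.pos u ∉ b ∧ SIdx.pos (u + 1) ∉ b

/-- `(u, u+1)` as a sublist. -/
def UPl (u : ℕ) (g : List SIdx) : Prop :=
  [SIdx.pos u, SIdx.pos (u + 1)].Sublist g

/-- `(u+2, u+1)` as a sublist. -/
def DNl (u : ℕ) (g : List SIdx) : Prop :=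
  [SIdx.pos (u + 2), SIdx.pos (u + 1)].Sublist g

lemma NFl.mem {u : ℕ} {g : List SIdx} (h : NFl u g) : SIdx.pos u ∈ g := by
  obtain ⟨a, b, rfl, -, -⟩ := h; simp

lemma NFl.append {u : ℕ} {g : List SIdx} (h : NFl u g) {t : SIdx}
    (h1 : t ≠ SIdx.pos u) (h2 : t ≠ SIdx.pos (u + 1)) : NFl u (g ++ [t]) := by
  obtain ⟨a, b, rfl, hb1, hb2⟩ := h
  refine ⟨a, b ++ [t], by simp, ?_, ?_⟩
  · intro hmem
    rcases List.mem_append.1 hmem with h' | h'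
    · exact hb1 h'
    · exact h1 (List.mem_singleton.1 h').symm
  · intro hmem
    rcases List.mem_append.1 hmem with h' | h'
    · exact hb2 h'
    · exact h2 (List.mem_singleton.1 h').symm

lemma NFl.self (u : ℕ) (g : List SIdx) : NFl u (g ++ [SIdx.pos u]) :=
  ⟨g, [], by simp, by simp, by simp⟩

lemma UPl.append {u : ℕ} {g : List SIdx} (h : UPl u g) (g' : List SIdx) :
    UPl u (g ++ g') := h.trans (List.sublist_append_left g g')

lemma DNl.append {u : ℕ} {g : List SIdx} (h : DNl u g) (g' : List SIdx) :
    DNl u (g ++ g') := h.trans (List.sublist_append_left g g')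

lemma UPl.intro {u : ℕ} {g : List SIdx} (h : SIdx.pos u ∈ g) :
    UPl u (g ++ [SIdx.pos (u + 1)]) := by
  have h1 : [SIdx.pos u].Sublist g := List.singleton_sublist.2 h
  exact h1.append (List.Sublist.refl [SIdx.pos (u + 1)])

lemma DNl.intro {u : ℕ} {g : List SIdx} (h : SIdx.pos (u + 2) ∈ g) :
    DNl u (g ++ [SIdx.pos (u + 1)]) := by
  have h1 : [SIdx.pos (u + 2)].Sublist g := List.singleton_sublist.2 h
  exact h1.append (List.Sublist.refl [SIdx.pos (u + 1)])

section Bans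

variable {α γ δ : List SIdx} {u : ℕ}

lemma ban_NF (hsip : SIP α) (hs : α = γ ++ SIdx.pos u :: δ) (h : NFl u γ) : False := by
  obtain ⟨a, b, rfl, hb1, hb2⟩ := h
  subst hs
  rw [show (a ++ SIdx.pos u :: b) ++ SIdx.pos u :: δ
      = a ++ SIdx.pos u :: (b ++ SIdx.pos u :: δ) by simp] at hsip
  have hlen : (a ++ SIdx.pos u :: (b ++ SIdx.pos u :: δ)).length
      = a.length + (b.length + 1 + δ.length + 1) := by simp; omega
  have h1 : a.length < (a ++ SIdx.pos u :: (b ++ SIdx.pos u :: δ)).length := by omega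
  have h2 : a.length + (b.length + 1)
      < (a ++ SIdx.pos u :: (b ++ SIdx.pos u :: δ)).length := by omega
  have hg1 : (a ++ SIdx.pos u :: (b ++ SIdx.pos u :: δ))[a.length]'h1 = SIdx.pos u := by
    rw [List.getElem_append_right (le_refl a.length)]
    simp
  have hg2 : (a ++ SIdx.pos u :: (b ++ SIdx.pos u :: δ))[a.length + (b.length + 1)]'h2
      = SIdx.pos u := by
    rw [List.getElem_append_right (Nat.le_add_right _ _)]
    simp only [Nat.add_sub_cancel_left, List.getElem_cons_succ]
    rw [List.getElem_append_right (le_refl b.length)]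
    simp
  obtain ⟨c, hca, hcb, hcv⟩ := hsip ⟨a.length, h1⟩ ⟨a.length + (b.length + 1), h2⟩
    (by simp [Fin.lt_def]) (by simp only [List.get_eq_getElem]; rw [hg1, hg2])
  have hcl : a.length < (c : ℕ) := hca
  have hcu : (c : ℕ) < a.length + (b.length + 1) := hcb
  obtain ⟨j, hj, hcj⟩ : ∃ j, j < b.length ∧ (c : ℕ) = a.length + (j + 1) :=
    ⟨(c : ℕ) - a.length - 1, by omega, by omega⟩
  have hgc : (a ++ SIdx.pos u :: (b ++ SIdx.pos u :: δ))[(c : ℕ)]'c.2 = SIdx.pos (u + 1) := by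
    have := hcv
    simp only [List.get_eq_getElem, hg1] at this
    rw [this]; rfl
  have hmem : SIdx.pos (u + 1) ∈ b := by
    rw [← hgc]
    simp only [hcj]
    rw [List.getElem_append_right (Nat.le_add_right _ _)]
    simp only [Nat.add_sub_cancel_left, List.getElem_cons_succ]
    rw [List.getElem_append_left hj]
    exact List.getElem_mem hj
  exact hb2 hmem

lemma chainUp_two (k : ℕ) :
    chainUp (SIdx.pos k) 2 = [SIdx.pos k, SIdx.pos (k + 1), SIdx.pos (k + 2)] := by
  show chainUp (SIdx.pos k) (1 + 1) = _
  rw [chainUp, chainUp, chainUp]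
  simp [SIdx.succ]

lemma consAt_ge_two {k : ℕ} (hsub : (chainUp (SIdx.pos k) 2).Sublist α) :
    (2 : ℤ) ≤ consAt α (SIdx.pos k) := by
  classical
  have hmem : SIdx.pos k ∈ α := hsub.subset (by rw [chainUp_two]; simp)
  have hlen : 3 ≤ α.length := by
    have := hsub.length_le; rw [chainUp_two] at this; simpa using this
  rw [consAt]
  rw [if_pos hmem]
  have h2 : 2 ≤ @Nat.findGreatest (fun p : ℕ => (chainUp (SIdx.pos k) p).Sublist α)
      (Classical.decPred _) α.length :=
    @Nat.le_findGreatest 2 _ (Classical.decPred _) _ (by omega) hsub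
  exact_mod_cast h2

lemma invsAt_ge_two {k : ℕ} (hsub : ((chainUp (SIdx.pos k) 2).reverse).Sublist α) :
    (2 : ℤ) ≤ invsAt α (SIdx.pos k) := by
  classical
  have hmem : SIdx.pos k ∈ α := hsub.subset (by rw [chainUp_two]; simp)
  have hlen : 3 ≤ α.length := by
    have := hsub.length_le; rw [chainUp_two] at this; simpa using this
  rw [invsAt]
  rw [if_pos hmem]
  have h2 : 2 ≤ @Nat.findGreatest (fun p : ℕ => ((chainUp (SIdx.pos k) p).reverse).Sublist α)
      (Classical.decPred _) α.length :=
    @Nat.le_findGreatest 2 _ (Classical.decPred _) _ (by omega) hsub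
  exact_mod_cast h2

end Bans

section Machine

variable {n : ℕ}

/-- One step of the column update on a block row. -/
noncomputable def stepW (m u : ℕ) (X : Matrix (Fin n) (Fin n) ℂ)
    (w : ℕ → Matrix (Fin n) (Fin n) ℂ) :
    ℕ → Matrix (Fin n) (Fin n) ℂ := fun j =>
  if u = 0 then (if j = m - 1 then w j * X else w j)
  else if j = m - 1 - u then w j * X + w (j + 1)
  else if j = m - u then w (m - 1 - u)
  else w j

/-- The row invariant: the three families of states of the block row. -/
inductive RInv (m i : ℕ) (Xs : List (Matrix (Fin n) (Fin n) ℂ)) :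
    List SIdx → (ℕ → Matrix (Fin n) (Fin n) ℂ) → Prop
  | A (g : List SIdx) (hd : ℕ) (H : Matrix (Fin n) (Fin n) ℂ)
      (w : ℕ → Matrix (Fin n) (Fin n) ℂ)
      (hw : ∀ j, w j = if j = hd then H else 0)
      (hhi : hd ≤ i) (hih : i ≤ hd + 2)
      (hH : H = 1 ∨ (H ∈ Xs ∧ NFl (m - 1 - hd) g))
      (hnf : hd < i → NFl (m - 1 - hd) g)
      (hup : hd + 2 ≤ i → UPl (m - 2 - hd) g) : RInv m i Xs g w
  | B (g : List SIdx) (p hd : ℕ) (x H : Matrix (Fin n) (Fin n) ℂ)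
      (w : ℕ → Matrix (Fin n) (Fin n) ℂ)
      (hw : ∀ j, w j = if j = p then x else if j = hd then H else 0)
      (c1 : i ≤ p + 1) (c2 : p < hd) (c3 : i ≤ hd) (c4 : hd ≤ i + 1) (c5 : p ≤ i)
      (c6 : i + 2 ≤ m)
      (hx : x ∈ Xs)
      (hnfp : NFl (m - 1 - p) g)
      (hH : H = 1 ∨ (H ∈ Xs ∧ NFl (m - 1 - hd) g))
      (hnfh : hd ≤ i → NFl (m - 1 - hd) g)
      (hupp : p < i → UPl (m - 1 - i) g) : RInv m i Xs g w
  | C (g : List SIdx) (p1 p2 : ℕ) (x1 x2 H : Matrix (Fin n) (Fin n) ℂ)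
      (w : ℕ → Matrix (Fin n) (Fin n) ℂ)
      (hw : ∀ j, w j = if j = p1 then x1 else if j = p2 then x2 else
        if j = i + 2 then H else 0)
      (c1 : i ≤ p1 + 1) (c2 : p1 < p2) (c3 : p2 ≤ i + 1) (c4 : i + 3 ≤ m)
      (hx1 : x1 ∈ Xs) (hx2 : x2 ∈ Xs)
      (hnf1 : NFl (m - 1 - p1) g) (hnf2 : NFl (m - 1 - p2) g)
      (hH : H = 1 ∨ (H ∈ Xs ∧ NFl (m - 3 - i) g))
      (hdn : DNl (m - 3 - i) g)
      (hdn2 : p2 ≤ i → DNl (m - 2 - i) g)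
      (hup : p1 < i → UPl (m - 1 - i) g) : RInv m i Xs g w

lemma UPl.mem_left {u : ℕ} {g : List SIdx} (h : UPl u g) : SIdx.pos u ∈ g :=
  h.subset (by simp)

set_option maxHeartbeats 3200000 in
lemma RInv.step {m i : ℕ} {Xs : List (Matrix (Fin n) (Fin n) ℂ)}
    (hi : i < m) {g : List SIdx} {w : ℕ → Matrix (Fin n) (Fin n) ℂ}
    (inv : RInv m i Xs g w)
    (u : ℕ) (hu : u < m) (X : Matrix (Fin n) (Fin n) ℂ) (hX : X ∈ Xs)
    (LA : ¬ NFl u g)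
    (LB : ∀ u', u' + 2 = u → 1 ≤ u' → ¬ UPl u' g)
    (LC : 1 ≤ u → ¬ DNl u g) :
    RInv m i Xs (g ++ [SIdx.pos u]) (stepW m u X w) := by
  have posne : ∀ a b : ℕ, a ≠ b → SIdx.pos a ≠ SIdx.pos b := by
    intro a b hab
    simp only [ne_eq, SIdx.pos.injEq]
    exact hab
  cases inv with
  | A hd H w hw hhi hih hH hnf hup =>
    by_cases hu0 : u = 0
    · subst hu0
      have hstep : ∀ j, stepW m 0 X w j = if j = m - 1 then w j * X else w j := by
        intro j; simp [stepW]
      by_cases hhm : hd = m - 1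
      · rcases hH with hH1 | ⟨hHX, hnfH⟩
        · -- convert
          subst hH1
          refine RInv.A _ hd X _ ?_ hhi hih (Or.inr ⟨hX, ?_⟩)
            (fun h => absurd h (by omega)) (fun h => absurd h (by omega))
          · intro j; rw [hstep j]; simp only [hw]
            split_ifs <;> first | (exfalso; omega) | simp
          · rw [show m - 1 - hd = 0 by omega]
            exact NFl.self 0 g
        · exfalso
          rw [show m - 1 - hd = 0 by omega] at hnfH
          exact LA hnfH
      · -- noop
        refine RInv.A _ hd H _ ?_ hhi hih ?_ ?_ ?_
        · intro j; rw [hstep j]; simp only [hw]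
          split_ifs <;> first | (exfalso; omega) | simp
        · rcases hH with h1 | ⟨h1, h2⟩
          · exact Or.inl h1
          · exact Or.inr ⟨h1, h2.append (posne _ _ (by omega)) (posne _ _ (by omega))⟩
        · exact fun h => (hnf h).append (posne _ _ (by omega)) (posne _ _ (by omega))
        · exact fun h => (hup h).append _
    · have hr1 : 1 ≤ u := by omega
      have hrm : m - 1 - u + u + 1 = m := by omega
      set r := m - 1 - u with hrdef
      have hmu : m - u = r + 1 := by omega
      have hstep : ∀ j, stepW m u X w j =
          if j = r then w j * X + w (j + 1) else if j = r + 1 then w r else w j := by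
        intro j; simp only [stepW, hmu, ← hrdef]; rw [if_neg hu0]
      by_cases h1 : r = hd
      · -- op at the head
        by_cases h2 : hd < i
        · exfalso
          rw [show m - 1 - hd = u by omega] at hnf
          exact LA (hnf h2)
        · rcases hH with hH1 | ⟨hHX, hnfH⟩
          · -- deposit: hd = i, H = 1
            have hdi : hd = i := by omega
            subst hH1
            refine RInv.B _ hd (hd + 1) X 1 _ ?_ (by omega) (by omega) (by omega)
              (by omega) (by omega) (by omega) hX ?_ (Or.inl rfl)
              (fun h => absurd h (by omega)) (fun h => absurd h (by omega))
            · intro j; rw [hstep j]; simp only [hw]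
              split_ifs <;> first | (exfalso; omega) | simp
            · rw [show m - 1 - hd = u by omega]
              exact NFl.self u g
          · exfalso
            rw [show m - 1 - hd = u by omega] at hnfH
            exact LA hnfH
      · by_cases h2 : r + 1 = hd
        · -- move head left
          by_cases h3 : hd + 2 ≤ i
          · exfalso
            rw [show m - 2 - hd = u - 2 by omega] at hup
            exact LB (u - 2) (by omega) (by omega) (hup h3)
          · -- new head at r = hd - 1
            refine RInv.A _ r H _ ?_ (by omega) (by omega) ?_ ?_ ?_
            · intro j; rw [hstep j]; simp only [hw]
              split_ifs <;> first | (exfalso; omega) | simp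
            · rcases hH with hH1 | ⟨hHX, _⟩
              · exact Or.inl hH1
              · refine Or.inr ⟨hHX, ?_⟩
                rw [show m - 1 - r = u by omega]
                exact NFl.self u g
            · intro h
              rw [show m - 1 - r = u by omega]
              exact NFl.self u g
            · intro h
              have hmem : SIdx.pos (m - 1 - hd) ∈ g := (hnf (by omega)).mem
              have h5 : UPl (m - 1 - hd) (g ++ [SIdx.pos (m - 1 - hd + 1)]) :=
                UPl.intro hmem
              rw [show m - 1 - hd + 1 = u by omega] at h5
              rw [show m - 2 - r = m - 1 - hd by omega]
              exact h5
        · -- noop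
          refine RInv.A _ hd H _ ?_ hhi hih ?_ ?_ ?_
          · intro j; rw [hstep j]; simp only [hw]
            split_ifs <;> first | (exfalso; omega) | simp
          · rcases hH with hH1 | ⟨hHX, h4⟩
            · exact Or.inl hH1
            · exact Or.inr ⟨hHX, h4.append (posne _ _ (by omega)) (posne _ _ (by omega))⟩
          · exact fun h => (hnf h).append (posne _ _ (by omega)) (posne _ _ (by omega))
          · exact fun h => (hup h).append _
  | B p hd x H w hw c1 c2 c3 c4 c5 c6 hx hnfp hH hnfh hupp =>
    by_cases hu0 : u = 0
    · subst hu0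
      have hstep : ∀ j, stepW m 0 X w j = if j = m - 1 then w j * X else w j := by
        intro j; simp [stepW]
      by_cases hhm : hd = m - 1
      · rcases hH with hH1 | ⟨hHX, hnfH⟩
        · -- convert head
          subst hH1
          refine RInv.B _ p hd x X _ ?_ c1 c2 c3 c4 c5 c6 hx ?_
            (Or.inr ⟨hX, ?_⟩) ?_ ?_
          · intro j; rw [hstep j]; simp only [hw]
            split_ifs <;> first | (exfalso; omega) | simp
          · exact hnfp.append (posne _ _ (by omega)) (posne _ _ (by omega))
          · rw [show m - 1 - hd = 0 by omega]; exact NFl.self 0 g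
          · intro h; exact absurd h (by omega)
          · exact fun h => (hupp h).append _
        · exfalso
          rw [show m - 1 - hd = 0 by omega] at hnfH
          exact LA hnfH
      · -- noop
        refine RInv.B _ p hd x H _ ?_ c1 c2 c3 c4 c5 c6 hx ?_ ?_ ?_ ?_
        · intro j; rw [hstep j]; simp only [hw]
          split_ifs <;> first | (exfalso; omega) | simp
        · exact hnfp.append (posne _ _ (by omega)) (posne _ _ (by omega))
        · rcases hH with hH1 | ⟨hHX, h4⟩
          · exact Or.inl hH1
          · exact Or.inr ⟨hHX, h4.append (posne _ _ (by omega)) (posne _ _ (by omega))⟩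
        · exact fun h => (hnfh h).append (posne _ _ (by omega)) (posne _ _ (by omega))
        · exact fun h => (hupp h).append _
    · have hr1 : 1 ≤ u := by omega
      have hrm : m - 1 - u + u + 1 = m := by omega
      set r := m - 1 - u with hrdef
      have hmu : m - u = r + 1 := by omega
      have hstep : ∀ j, stepW m u X w j =
          if j = r then w j * X + w (j + 1) else if j = r + 1 then w r else w j := by
        intro j; simp only [stepW, hmu, ← hrdef]; rw [if_neg hu0]
      by_cases h1 : r = p
      · exfalso
        rw [show m - 1 - p = u by omega] at hnfp
        exact LA hnfp
      · by_cases h2 : r + 1 = p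
        · by_cases h3 : p = i
          · -- move tail left
            refine RInv.B _ r hd x H _ ?_ (by omega) (by omega) c3 c4 (by omega) c6 hx
              ?_ ?_ ?_ ?_
            · intro j; rw [hstep j]; simp only [hw]
              split_ifs <;> first | (exfalso; omega) | simp
            · rw [show m - 1 - r = u by omega]; exact NFl.self u g
            · rcases hH with hH1 | ⟨hHX, h4⟩
              · exact Or.inl hH1
              · exact Or.inr ⟨hHX, h4.append (posne _ _ (by omega)) (posne _ _ (by omega))⟩
            · exact fun h => (hnfh h).append (posne _ _ (by omega)) (posne _ _ (by omega))
            · intro h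
              have hmem : SIdx.pos (m - 1 - i) ∈ g := by
                have h5 := hnfp.mem
                rwa [show m - 1 - p = m - 1 - i by omega] at h5
              have h6 := UPl.intro hmem
              rwa [show m - 1 - i + 1 = u by omega] at h6
          · -- p = i - 1 : banned via LB
            exfalso
            rw [show m - 1 - i = u - 2 by omega] at hupp
            exact LB (u - 2) (by omega) (by omega) (hupp (by omega))
        · by_cases h3 : r = hd
          · -- op at head
            rcases hH with hH1 | ⟨hHX, hnfH⟩
            · by_cases h4 : hd ≤ i
              · exfalso
                rw [show m - 1 - hd = u by omega] at hnfh
                exact LA (hnfh h4)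
              · -- deposit: hd = i+1, H = 1
                subst hH1
                have hdi : hd = i + 1 := by omega
                refine RInv.C _ p (i + 1) x X 1 _ ?_ c1 (by omega) (by omega) (by omega)
                  hx hX ?_ ?_ (Or.inl rfl) ?_ (fun h => absurd h (by omega)) ?_
                · intro j; rw [hstep j]; simp only [hw]
                  split_ifs <;> first | (exfalso; omega) | simp
                · exact hnfp.append (posne _ _ (by omega)) (posne _ _ (by omega))
                · rw [show m - 1 - (i + 1) = u by omega]; exact NFl.self u g
                · -- DNl (m - 3 - i) (g ++ [pos u])
                  have hmem : SIdx.pos (m - 1 - i) ∈ g := by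
                    rcases Nat.lt_or_ge p i with hpi | hpi
                    · exact (hupp hpi).mem_left
                    · have h5 := hnfp.mem
                      rwa [show m - 1 - p = m - 1 - i by omega] at h5
                  have h6 := DNl.intro (u := m - 3 - i)
                    (by rwa [show m - 3 - i + 2 = m - 1 - i by omega])
                  rwa [show m - 3 - i + 1 = u by omega] at h6
                · exact fun h => (hupp h).append _
            · exfalso
              rw [show m - 1 - hd = u by omega] at hnfH
              exact LA hnfH
          · by_cases h4 : r + 1 = hd
            · -- move head left (hd = i+1, r = i, p < r)
              have hdi : hd = i + 1 := by omega
              have hpr : p < r := by omega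
              refine RInv.B _ p r x H _ ?_ c1 (by omega) (by omega) (by omega) c5 c6 hx
                ?_ ?_ ?_ ?_
              · intro j; rw [hstep j]; simp only [hw]
                split_ifs <;> first | (exfalso; omega) | simp
              · exact hnfp.append (posne _ _ (by omega)) (posne _ _ (by omega))
              · rcases hH with hH1 | ⟨hHX, h5⟩
                · exact Or.inl hH1
                · refine Or.inr ⟨hHX, ?_⟩
                  rw [show m - 1 - r = u by omega]; exact NFl.self u g
              · intro h
                rw [show m - 1 - r = u by omega]; exact NFl.self u g
              · exact fun h => (hupp h).append _
            · -- noop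
              refine RInv.B _ p hd x H _ ?_ c1 c2 c3 c4 c5 c6 hx ?_ ?_ ?_ ?_
              · intro j; rw [hstep j]; simp only [hw]
                split_ifs <;> first | (exfalso; omega) | simp
              · exact hnfp.append (posne _ _ (by omega)) (posne _ _ (by omega))
              · rcases hH with hH1 | ⟨hHX, h5⟩
                · exact Or.inl hH1
                · exact Or.inr ⟨hHX, h5.append (posne _ _ (by omega))
                    (posne _ _ (by omega))⟩
              · exact fun h => (hnfh h).append (posne _ _ (by omega))
                  (posne _ _ (by omega))
              · exact fun h => (hupp h).append _
  | C p1 p2 x1 x2 H w hw c1 c2 c3 c4 hx1 hx2 hnf1 hnf2 hH hdn hdn2 hup =>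
    by_cases hu0 : u = 0
    · subst hu0
      have hstep : ∀ j, stepW m 0 X w j = if j = m - 1 then w j * X else w j := by
        intro j; simp [stepW]
      by_cases hhm : i + 2 = m - 1
      · rcases hH with hH1 | ⟨hHX, hnfH⟩
        · -- convert head
          subst hH1
          refine RInv.C _ p1 p2 x1 x2 X _ ?_ c1 c2 c3 c4 hx1 hx2 ?_ ?_
            (Or.inr ⟨hX, ?_⟩) (hdn.append _) (fun h => (hdn2 h).append _)
            (fun h => (hup h).append _)
          · intro j; rw [hstep j]; simp only [hw]
            split_ifs <;> first | (exfalso; omega) | simp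
          · exact hnf1.append (posne _ _ (by omega)) (posne _ _ (by omega))
          · exact hnf2.append (posne _ _ (by omega)) (posne _ _ (by omega))
          · rw [show m - 3 - i = 0 by omega]; exact NFl.self 0 g
        · exfalso
          rw [show m - 3 - i = 0 by omega] at hnfH
          exact LA hnfH
      · -- noop
        refine RInv.C _ p1 p2 x1 x2 H _ ?_ c1 c2 c3 c4 hx1 hx2 ?_ ?_ ?_
          (hdn.append _) (fun h => (hdn2 h).append _) (fun h => (hup h).append _)
        · intro j; rw [hstep j]; simp only [hw]
          split_ifs <;> first | (exfalso; omega) | simp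
        · exact hnf1.append (posne _ _ (by omega)) (posne _ _ (by omega))
        · exact hnf2.append (posne _ _ (by omega)) (posne _ _ (by omega))
        · rcases hH with hH1 | ⟨hHX, h4⟩
          · exact Or.inl hH1
          · exact Or.inr ⟨hHX, h4.append (posne _ _ (by omega)) (posne _ _ (by omega))⟩
    · have hr1 : 1 ≤ u := by omega
      have hrm : m - 1 - u + u + 1 = m := by omega
      set r := m - 1 - u with hrdef
      have hmu : m - u = r + 1 := by omega
      have hstep : ∀ j, stepW m u X w j =
          if j = r then w j * X + w (j + 1) else if j = r + 1 then w r else w j := by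
        intro j; simp only [stepW, hmu, ← hrdef]; rw [if_neg hu0]
      by_cases h1 : r = p1
      · exfalso
        rw [show m - 1 - p1 = u by omega] at hnf1
        exact LA hnf1
      · by_cases h2 : r = p2
        · exfalso
          rw [show m - 1 - p2 = u by omega] at hnf2
          exact LA hnf2
        · by_cases h3 : r + 1 = p1
          · by_cases h4 : p1 = i
            · -- move first tail left
              refine RInv.C _ r p2 x1 x2 H _ ?_ (by omega) (by omega) c3 c4 hx1 hx2
                ?_ ?_ ?_ (hdn.append _) ?_ ?_
              · intro j; rw [hstep j]; simp only [hw]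
                split_ifs <;> first | (exfalso; omega) | simp
              · rw [show m - 1 - r = u by omega]; exact NFl.self u g
              · exact hnf2.append (posne _ _ (by omega)) (posne _ _ (by omega))
              · rcases hH with hH1 | ⟨hHX, h5⟩
                · exact Or.inl hH1
                · exact Or.inr ⟨hHX, h5.append (posne _ _ (by omega))
                    (posne _ _ (by omega))⟩
              · exact fun h => absurd h (by omega)
              · intro h
                have hmem : SIdx.pos (m - 1 - i) ∈ g := by
                  have h5 := hnf1.mem
                  rwa [show m - 1 - p1 = m - 1 - i by omega] at h5
                have h6 := UPl.intro hmem
                rwa [show m - 1 - i + 1 = u by omega] at h6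
            · -- p1 = i - 1: banned via LB
              exfalso
              rw [show m - 1 - i = u - 2 by omega] at hup
              exact LB (u - 2) (by omega) (by omega) (hup (by omega))
          · by_cases h4 : r + 1 = p2
            · -- move second tail left: p2 = i+1, p1 = i-1, r = i
              have hp2 : p2 = i + 1 := by omega
              have hp1 : p1 + 1 = i := by omega
              refine RInv.C _ p1 r x1 x2 H _ ?_ c1 (by omega) (by omega) c4 hx1 hx2
                ?_ ?_ ?_ (hdn.append _) ?_ ?_
              · intro j; rw [hstep j]; simp only [hw]
                split_ifs <;> first | (exfalso; omega) | simp
              · exact hnf1.append (posne _ _ (by omega)) (posne _ _ (by omega))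
              · rw [show m - 1 - r = u by omega]; exact NFl.self u g
              · rcases hH with hH1 | ⟨hHX, h5⟩
                · exact Or.inl hH1
                · exact Or.inr ⟨hHX, h5.append (posne _ _ (by omega))
                    (posne _ _ (by omega))⟩
              · intro h
                have hmem : SIdx.pos (m - 2 - i + 2) ∈ g := by
                  have h5 := hnf1.mem
                  rwa [show m - 1 - p1 = m - 2 - i + 2 by omega] at h5
                have h6 := DNl.intro hmem
                rwa [show m - 2 - i + 1 = u by omega] at h6
              · exact fun h => (hup (by omega)).append _
            · by_cases h5 : r = i + 2
              · -- op at the head position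
                rcases hH with hH1 | ⟨hHX, hnfH⟩
                · -- banned via LC
                  exfalso
                  rw [show m - 3 - i = u by omega] at hdn
                  exact LC (by omega) hdn
                · exfalso
                  rw [show m - 3 - i = u by omega] at hnfH
                  exact LA hnfH
              · by_cases h6 : r + 1 = i + 2
                · -- op just left of head: r = i+1, p2 ≤ i: banned via LC
                  have hp2i' : p2 ≤ i := by omega
                  exfalso
                  rw [show m - 2 - i = u by omega] at hdn2
                  exact LC (by omega) (hdn2 hp2i')
                · -- noop
                  refine RInv.C _ p1 p2 x1 x2 H _ ?_ c1 c2 c3 c4 hx1 hx2 ?_ ?_ ?_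
                    (hdn.append _) (fun h => (hdn2 h).append _)
                    (fun h => (hup h).append _)
                  · intro j; rw [hstep j]; simp only [hw]
                    split_ifs <;> first | (exfalso; omega) | simp
                  · exact hnf1.append (posne _ _ (by omega)) (posne _ _ (by omega))
                  · exact hnf2.append (posne _ _ (by omega)) (posne _ _ (by omega))
                  · rcases hH with hH1 | ⟨hHX, h7⟩
                    · exact Or.inl hH1
                    · exact Or.inr ⟨hHX, h7.append (posne _ _ (by omega))
                        (posne _ _ (by omega))⟩

end Machine


section Glue

variable {m n : ℕ}

/-- The `i`-th block row of an `mn × mn` matrix, as a `ℕ`-indexed family of blocks. -/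
noncomputable def rowOf (M : Matrix (Fin m × Fin n) (Fin m × Fin n) ℂ) (i : Fin m) :
    ℕ → Matrix (Fin n) (Fin n) ℂ := fun j =>
  if hj : j < m then (fun p q => M (i, p) (⟨j, hj⟩, q)) else 0

lemma rowOf_pos (M : Matrix (Fin m × Fin n) (Fin m × Fin n) ℂ) (i : Fin m) {j : ℕ}
    (hj : j < m) :
    rowOf M i j = (fun p q => M (i, p) (⟨j, hj⟩, q) : Matrix (Fin n) (Fin n) ℂ) := by
  rw [rowOf]; exact dif_pos hj

lemma rowOf_neg (M : Matrix (Fin m × Fin n) (Fin m × Fin n) ℂ) (i : Fin m) {j : ℕ}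
    (hj : ¬ j < m) : rowOf M i j = 0 := by
  rw [rowOf]; exact dif_neg hj

lemma rowOf_one (i : Fin m) :
    ∀ j, rowOf (1 : Matrix (Fin m × Fin n) (Fin m × Fin n) ℂ) i j
      = if j = (i : ℕ) then 1 else 0 := by
  intro j
  by_cases hj : j < m
  · rw [rowOf_pos _ _ hj]
    by_cases hji : j = (i : ℕ)
    · rw [if_pos hji]
      ext p q
      have h1 : (⟨j, hj⟩ : Fin m) = i := by simp [Fin.ext_iff, hji]
      rw [h1]
      simp [Matrix.one_apply, Prod.ext_iff]
    · rw [if_neg hji]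
      ext p q
      have h1 : ¬ ((i, p) = ((⟨j, hj⟩ : Fin m), q)) := by
        intro h
        have := congrArg Prod.fst h
        simp [Fin.ext_iff] at this
        omega
      simp [Matrix.one_apply, h1]
  · rw [rowOf_neg _ _ hj, if_neg (by omega : ¬ j = (i : ℕ))]

set_option maxHeartbeats 1600000 in
lemma rowOf_mul_elem (M : Matrix (Fin m × Fin n) (Fin m × Fin n) ℂ) (u : ℕ) (hu : u < m)
    (X : Matrix (Fin n) (Fin n) ℂ) (i : Fin m) :
    rowOf (M * elemMat m n (SIdx.pos u) X) i = stepW m u X (rowOf M i) := by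
  have him : (i : ℕ) < m := i.isLt
  funext j
  by_cases hj : j < m
  swap
  · simp only [stepW]
    split_ifs <;> first | (exfalso; omega) | rw [rowOf_neg _ _ hj, rowOf_neg _ _ hj]
  by_cases hu0 : u = 0
  · subst hu0
    have hE : ∀ (l : Fin m) (s : Fin n) (jf : Fin m) (q : Fin n),
        elemMat m n (SIdx.pos 0) X (l, s) (jf, q) =
          if l = jf then (if (l : ℕ) = m - 1 then X s q else if s = q then 1 else 0)
          else 0 := by
      intro l s jf q
      simp only [elemMat, SIdx.val]
      norm_num
    by_cases hjm : j = m - 1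
    · have hjeq : stepW m 0 X (rowOf M i) j = rowOf M i j * X := by
        simp [stepW, hjm]
      rw [hjeq]
      rw [rowOf_pos _ _ hj, rowOf_pos _ _ hj]
      ext p q
      rw [Matrix.mul_apply, Matrix.mul_apply (M := (fun p q => M (i, p) (⟨j, hj⟩, q) : Matrix (Fin n) (Fin n) ℂ)), Fintype.sum_prod_type]
      rw [Finset.sum_eq_single (⟨j, hj⟩ : Fin m)]
      · apply Finset.sum_congr rfl
        intro s _
        rw [hE]
        simp [hjm]
      · intro b _ hb
        apply Finset.sum_eq_zero
        intro s _
        rw [hE, if_neg hb, mul_zero]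
      · intro h
        exact absurd (Finset.mem_univ _) h
    · have hjeq : stepW m 0 X (rowOf M i) j = rowOf M i j := by
        simp [stepW, hjm]
      rw [hjeq, rowOf_pos _ _ hj, rowOf_pos _ _ hj]
      ext p q
      rw [Matrix.mul_apply]
      rw [Finset.sum_eq_single ((⟨j, hj⟩ : Fin m), q)]
      · rw [hE]
        simp [hjm]
      · intro b _ hb
        rcases b with ⟨l, s⟩
        rw [hE]
        by_cases hl : l = (⟨j, hj⟩ : Fin m)
        · subst hl
          rw [if_pos rfl, if_neg (by simpa using hjm), if_neg, mul_zero]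
          intro hsq
          exact hb (by rw [hsq])
        · rw [if_neg hl, mul_zero]
      · intro h
        exact absurd (Finset.mem_univ _) h
  · -- u ≥ 1
    have hE : ∀ (l : Fin m) (s : Fin n) (jf : Fin m) (q : Fin n),
        elemMat m n (SIdx.pos u) X (l, s) (jf, q) =
          if (l : ℕ) = m - u - 1 ∧ (jf : ℕ) = m - u - 1 then X s q
          else if ((l : ℕ) = m - u - 1 ∧ (jf : ℕ) = m - u) ∨
              ((l : ℕ) = m - u ∧ (jf : ℕ) = m - u - 1) then
            (if s = q then 1 else 0)
          else if (l : ℕ) = m - u ∧ (jf : ℕ) = m - u then 0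
          else if (l, s) = (jf, q) then 1 else 0 := by
      intro l s jf q
      simp only [elemMat, SIdx.val, SIdx.isNeg]
      rw [if_neg hu0, if_neg (by omega : ¬ u = m)]
      norm_num
    have hr1 : m - u - 1 < m := by omega
    have hr2 : m - u < m := by omega
    set jr : Fin m := ⟨m - u - 1, hr1⟩ with hjr
    set jr1 : Fin m := ⟨m - u, hr2⟩ with hjr1
    have hjrv : (jr : ℕ) = m - u - 1 := rfl
    have hjr1v : (jr1 : ℕ) = m - u := rfl
    by_cases hj1 : j = m - 1 - u
    · -- target column r
      have hfj : (⟨j, hj⟩ : Fin m) = jr := by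
        apply Fin.ext; show j = m - u - 1; omega
      have hstepj : stepW m u X (rowOf M i) j
          = rowOf M i j * X + rowOf M i (j + 1) := by
        simp only [stepW]; rw [if_neg hu0, if_pos hj1]
      rw [hstepj]
      have hj1m : j + 1 < m := by omega
      rw [rowOf_pos _ _ hj, rowOf_pos _ _ hj, rowOf_pos _ _ hj1m]
      have hfj1 : (⟨j + 1, hj1m⟩ : Fin m) = jr1 := by
        apply Fin.ext; show j + 1 = m - u; omega
      ext p q
      have hdec : ∀ z : Fin m × Fin n,
          M (i, p) z * elemMat m n (SIdx.pos u) X z ((⟨j, hj⟩ : Fin m), q)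
          = (if z.1 = jr then M (i, p) z * X z.2 q else 0)
            + (if z = (jr1, q) then M (i, p) z else 0) := by
        rintro ⟨l, s⟩
        rw [hE, hfj]
        simp only [Prod.mk.injEq, Fin.ext_iff, hjrv, hjr1v]
        split_ifs <;> first | (exfalso; omega) | simp | skip
        all_goals (try (exfalso; omega))
        all_goals simp_all
      rw [Matrix.mul_apply]
      calc (∑ z : Fin m × Fin n,
            M (i, p) z * elemMat m n (SIdx.pos u) X z ((⟨j, hj⟩ : Fin m), q))
          = ∑ z : Fin m × Fin n, ((if z.1 = jr then M (i, p) z * X z.2 q else 0)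
            + (if z = (jr1, q) then M (i, p) z else 0)) :=
            Finset.sum_congr rfl fun z _ => hdec z
        _ = (∑ z : Fin m × Fin n, (if z.1 = jr then M (i, p) z * X z.2 q else 0))
            + ∑ z : Fin m × Fin n, (if z = (jr1, q) then M (i, p) z else 0) :=
            Finset.sum_add_distrib
        _ = (∑ s : Fin n, M (i, p) (jr, s) * X s q) + M (i, p) (jr1, q) := by
            congr 1
            · rw [Fintype.sum_prod_type]
              rw [Finset.sum_eq_single jr]
              · simp
              · intro b _ hb
                exact Finset.sum_eq_zero fun s _ => if_neg hb
              · intro h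
                exact absurd (Finset.mem_univ _) h
            · rw [Finset.sum_ite_eq' Finset.univ (jr1, q) (fun z => M (i, p) z)]
              simp
        _ = _ := by
            show _ = (∑ s, M (i, p) (⟨j, hj⟩, s) * X s q) + M (i, p) (⟨j + 1, hj1m⟩, q)
            rw [hfj, hfj1]
    · by_cases hj2 : j = m - u
      · -- target column r + 1
        have hstepj : stepW m u X (rowOf M i) j = rowOf M i (m - 1 - u) := by
          simp only [stepW]; rw [if_neg hu0, if_neg hj1, if_pos hj2]
        rw [hstepj]
        rw [rowOf_pos _ _ hj, rowOf_pos _ _ (by omega : m - 1 - u < m)]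
        have hfjr : (⟨m - 1 - u, by omega⟩ : Fin m) = jr := by
          apply Fin.ext; show m - 1 - u = m - u - 1; omega
        ext p q
        have hdec : ∀ z : Fin m × Fin n,
            M (i, p) z * elemMat m n (SIdx.pos u) X z ((⟨j, hj⟩ : Fin m), q)
            = if z = (jr, q) then M (i, p) z else 0 := by
          rintro ⟨l, s⟩
          rw [hE]
          simp only [Prod.mk.injEq, Fin.ext_iff, hjrv]
          split_ifs <;> first | (exfalso; omega) | simp | skip
          all_goals (try (exfalso; omega))
          all_goals simp_all
        rw [Matrix.mul_apply]
        rw [Finset.sum_congr rfl fun z _ => hdec z]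
        rw [Finset.sum_ite_eq' Finset.univ (jr, q) (fun z => M (i, p) z)]
        rw [if_pos (Finset.mem_univ _), hfjr]
      · -- other columns
        have hstepj : stepW m u X (rowOf M i) j = rowOf M i j := by
          simp only [stepW]; rw [if_neg hu0, if_neg hj1, if_neg hj2]
        rw [hstepj]
        rw [rowOf_pos _ _ hj, rowOf_pos _ _ hj]
        ext p q
        have hdec : ∀ z : Fin m × Fin n,
            M (i, p) z * elemMat m n (SIdx.pos u) X z ((⟨j, hj⟩ : Fin m), q)
            = if z = ((⟨j, hj⟩ : Fin m), q) then M (i, p) z else 0 := by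
          rintro ⟨l, s⟩
          rw [hE]
          simp only [Prod.mk.injEq, Fin.ext_iff]
          split_ifs <;> first | (exfalso; omega) | simp | skip
          all_goals (try (exfalso; omega))
          all_goals simp_all
        rw [Matrix.mul_apply]
        rw [Finset.sum_congr rfl fun z _ => hdec z]
        rw [Finset.sum_ite_eq' Finset.univ ((⟨j, hj⟩ : Fin m), q) (fun z => M (i, p) z)]
        rw [if_pos (Finset.mem_univ _)]

end Glue


section Main

variable {m n : ℕ}

lemma steps_inv {α : List SIdx} {Xs : List (Matrix (Fin n) (Fin n) ℂ)}
    (hsip : SIP α)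
    (hci : ∀ k : ℕ, 1 ≤ k → k ≤ m - 1 → consAt α (.pos k) ≤ 1 ∧ invsAt α (.pos k) ≤ 1)
    (i : ℕ) (hi : i < m) :
    ∀ (l : List (SIdx × Matrix (Fin n) (Fin n) ℂ)) (g : List SIdx)
      (w : ℕ → Matrix (Fin n) (Fin n) ℂ),
      α = g ++ l.map Prod.fst →
      (∀ pr ∈ l, (∃ u, pr.1 = SIdx.pos u ∧ u < m) ∧ pr.2 ∈ Xs) →
      RInv m i Xs g w →
      RInv m i Xs α (l.foldl (fun w pr => stepW m pr.1.val pr.2 w) w) := by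
  intro l
  induction l with
  | nil =>
    intro g w hg _ inv
    rw [List.foldl_nil]
    rw [List.map_nil, List.append_nil] at hg
    rw [hg]
    exact inv
  | cons pr l ih =>
    intro g w hg hl inv
    obtain ⟨⟨u, hpr1, hu⟩, hpr2⟩ := hl pr List.mem_cons_self
    have hsplit : α = g ++ SIdx.pos u :: l.map Prod.fst := by
      rw [hg]; simp [hpr1]
    have hpre : (g ++ [SIdx.pos u]).Sublist α := by
      rw [hsplit, show g ++ SIdx.pos u :: l.map Prod.fst
        = (g ++ [SIdx.pos u]) ++ l.map Prod.fst by simp]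
      exact List.sublist_append_left _ _
    have hLA : ¬ NFl u g := fun h => ban_NF hsip hsplit h
    have hLB : ∀ u', u' + 2 = u → 1 ≤ u' → ¬ UPl u' g := by
      intro u' hu' h1 hup
      have hchain : (chainUp (SIdx.pos u') 2).Sublist α := by
        rw [chainUp_two]
        have h2 : ([SIdx.pos u', SIdx.pos (u' + 1)] ++ [SIdx.pos (u' + 2)]).Sublist
            (g ++ [SIdx.pos (u' + 2)]) :=
          List.Sublist.append (l₂ := g) hup (List.Sublist.refl _)
        have h3 : (g ++ [SIdx.pos (u' + 2)]).Sublist α := by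
          rw [← hu'] at hpre
          exact hpre
        exact h2.trans h3
      have h5 := consAt_ge_two hchain
      have h4 := (hci u' h1 (by omega)).1
      omega
    have hLC : 1 ≤ u → ¬ DNl u g := by
      intro h1 hdn
      have hchain : ((chainUp (SIdx.pos u) 2).reverse).Sublist α := by
        rw [chainUp_two]
        rw [show ([SIdx.pos u, SIdx.pos (u + 1), SIdx.pos (u + 2)]).reverse
          = [SIdx.pos (u + 2), SIdx.pos (u + 1)] ++ [SIdx.pos u] from rfl]
        exact (List.Sublist.append (l₂ := g) hdn (List.Sublist.refl _)).trans hpre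
      have h5 := invsAt_ge_two hchain
      have h4 := (hci u h1 (by omega)).2
      omega
    have hstep := inv.step hi u hu pr.2 hpr2 hLA hLB hLC
    simp only [List.foldl_cons]
    rw [hpr1]
    exact ih (g ++ [SIdx.pos u]) _ (by rw [hsplit]; simp)
      (fun pr h => hl _ (List.mem_cons_of_mem _ h)) hstep

lemma rowOf_prod (i : Fin m) :
    ∀ (l : List (SIdx × Matrix (Fin n) (Fin n) ℂ)),
      (∀ pr ∈ l, ∃ u, pr.1 = SIdx.pos u ∧ u < m) →
      ∀ M, rowOf (M * (l.map fun pr => elemMat m n pr.1 pr.2).prod) i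
        = l.foldl (fun w pr => stepW m pr.1.val pr.2 w) (rowOf M i) := by
  intro l
  induction l using List.reverseRecOn with
  | nil => intro _ M; simp
  | append_singleton l pr ih =>
    intro hl M
    obtain ⟨u, hpr1, hu⟩ := hl pr (by simp)
    rw [List.map_append, List.prod_append, List.foldl_append]
    simp only [List.map_cons, List.map_nil, List.prod_cons, List.prod_nil, mul_one,
      List.foldl_cons, List.foldl_nil]
    rw [← mul_assoc]
    rw [hpr1]
    rw [rowOf_mul_elem _ u hu]
    rw [ih (fun pr h => hl pr (by simp [h])) M]
    rfl

end Main

end PentaAux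

/-- Let `α` be an index tuple with indices from `{0,…,m−1}` satisfying
the SIP, with `c_k(α) ≤ 1` and `i_k(α) ≤ 1` for every `1 ≤ k ≤ m−1`, and let `Xs` be a
matrix assignment for `α`.  Then `M_α(Xs)` is block penta-diagonal, and every block of
`M_α(Xs)` is `0`, `I_n`, or one of the matrices occurring in `Xs`. -/
theorem prodAssign_blockPenta_of_pos {m n : ℕ} (hm : 2 ≤ m)
    (α : List SIdx) (Xs : List (Matrix (Fin n) (Fin n) ℂ))
    (hα : ∀ k ∈ α, k.isNeg = false ∧ k.val < m)
    (hsip : SIP α)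
    (hci : ∀ k : ℕ, 1 ≤ k → k ≤ m - 1 → consAt α (.pos k) ≤ 1 ∧ invsAt α (.pos k) ≤ 1)
    (hlen : α.length = Xs.length) :
    BlockPenta (prodAssign m n α Xs) ∧
    ∀ i j : Fin m,
      blockOf (prodAssign m n α Xs) i j = 0 ∨
      blockOf (prodAssign m n α Xs) i j = 1 ∨
      blockOf (prodAssign m n α Xs) i j ∈ Xs := by
  classical
  have hzip : ∀ pr ∈ α.zip Xs, (∃ u, pr.1 = SIdx.pos u ∧ u < m) ∧ pr.2 ∈ Xs := by
    intro pr hpr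
    obtain ⟨hmem, hmem2⟩ := List.of_mem_zip hpr
    have h2 := hα pr.1 hmem
    refine ⟨?_, hmem2⟩
    cases h3 : pr.1 with
    | pos k =>
      refine ⟨k, rfl, ?_⟩
      rw [h3] at h2
      exact h2.2
    | neg k =>
      rw [h3] at h2
      simp [SIdx.isNeg] at h2
  have hmap : (α.zip Xs).map Prod.fst = α := List.map_fst_zip (le_of_eq hlen)
  have hrow : ∀ i : Fin m, PentaAux.RInv m (i : ℕ) Xs α
      (PentaAux.rowOf (prodAssign m n α Xs) i) := by
    intro i
    have h0 : PentaAux.RInv m (i : ℕ) Xs []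
        (PentaAux.rowOf (1 : Matrix (Fin m × Fin n) (Fin m × Fin n) ℂ) i) :=
      PentaAux.RInv.A [] (i : ℕ) 1 _ (PentaAux.rowOf_one i) le_rfl (by omega)
        (Or.inl rfl) (fun h => absurd h (by omega)) (fun h => absurd h (by omega))
    have h1 := PentaAux.steps_inv hsip hci (i : ℕ) i.isLt (α.zip Xs) [] _
      (by rw [List.nil_append, hmap]) hzip h0
    have h2 : PentaAux.rowOf (prodAssign m n α Xs) i
        = (α.zip Xs).foldl (fun w pr => PentaAux.stepW m pr.1.val pr.2 w)
          (PentaAux.rowOf 1 i) := by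
      have h3 := PentaAux.rowOf_prod i (α.zip Xs) (fun pr h => (hzip pr h).1) 1
      rw [one_mul] at h3
      exact h3
    rw [h2]
    exact h1
  have hblock : ∀ i j : Fin m, blockOf (prodAssign m n α Xs) i j
      = PentaAux.rowOf (prodAssign m n α Xs) i (j : ℕ) := by
    intro i j
    rw [PentaAux.rowOf_pos _ _ j.isLt]
    ext p q
    simp [blockOf]
  constructor
  · intro i j hij
    have hr := hrow i
    generalize hW : PentaAux.rowOf (prodAssign m n α Xs) i = W at hr
    have hbW : blockOf (prodAssign m n α Xs) i j = W (j : ℕ) := by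
      rw [hblock i j, hW]
    cases hr with
    | A hd H w hw hhi hih hH hnf hup =>
      rw [hbW, hw, if_neg (by omega)]
    | B p h x H w hw c1 c2 c3 c4 c5 c6 hx hnfp hH hnfh hupp =>
      rw [hbW, hw, if_neg (by omega), if_neg (by omega)]
    | C p1 p2 x1 x2 H w hw c1 c2 c3 c4 hx1 hx2 hnf1 hnf2 hH hdn hdn2 hup =>
      rw [hbW, hw, if_neg (by omega), if_neg (by omega), if_neg (by omega)]
  · intro i j
    have hr := hrow i
    generalize hW : PentaAux.rowOf (prodAssign m n α Xs) i = W at hr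
    have hbW : blockOf (prodAssign m n α Xs) i j = W (j : ℕ) := by
      rw [hblock i j, hW]
    rw [hbW]
    cases hr with
    | A hd H w hw hhi hih hH hnf hup =>
      rw [hw]
      split_ifs
      · rcases hH with h | ⟨h, -⟩
        · exact Or.inr (Or.inl h)
        · exact Or.inr (Or.inr h)
      · exact Or.inl rfl
    | B p h x H w hw c1 c2 c3 c4 c5 c6 hx hnfp hH hnfh hupp =>
      rw [hw]
      split_ifs
      · exact Or.inr (Or.inr hx)
      · rcases hH with h' | ⟨h', -⟩
        · exact Or.inr (Or.inl h')
        · exact Or.inr (Or.inr h')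
      · exact Or.inl rfl
    | C p1 p2 x1 x2 H w hw c1 c2 c3 c4 hx1 hx2 hnf1 hnf2 hH hdn hdn2 hup =>
      rw [hw]
      split_ifs
      · exact Or.inr (Or.inr hx1)
      · exact Or.inr (Or.inr hx2)
      · rcases hH with h' | ⟨h', -⟩
        · exact Or.inr (Or.inl h')
        · exact Or.inr (Or.inr h')
      · exact Or.inl rfl
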